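/- The set ℰ of extensions of all solid factors of a weighted sequence X is closed under taking the longest proper suffix: if S ∈ ℰ and S is nonempty, then the string obtained by deleting the first letter of S also belongs to ℰ. -/
import Mathlib


open scoped Classical

def matchProb {A : Type*} (p : ℕ → A → ℝ) : ℕ → List A → ℝ
  | _, [] => 1
  | i, a :: t => p i a * matchProb p (i + 1) t

/-- `P` is a solid factor of the weighted sequence (of length `n`, probabilities `p`,
threshold `1/z`) starting at (1-based) position `i`. -/
def SolidAt {A : Type*} (n : ℕ) (z : ℝ) (p : ℕ → A → ℝ) (i : ℕ) (P : List A) : Prop :=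
  1 ≤ i ∧ i + P.length ≤ n + 1 ∧ 1 / z ≤ matchProb p i P

/-- `P` is a right-maximal solid factor at position `i`: it is solid and no one-letter
extension is solid (this includes the case that `P` ends at position `n`). -/
def RightMaximalAt {A : Type*} (n : ℕ) (z : ℝ) (p : ℕ → A → ℝ) (i : ℕ) (P : List A) : Prop :=
  SolidAt n z p i P ∧ ∀ s : A, ¬ SolidAt n z p i (P ++ [s])

/-- The heavy-string suffix `𝐗[j..n]`, where `h j` is a heaviest letter at position `j`. -/
def heavyExt {A : Type*} (h : ℕ → A) (j n : ℕ) : List A :=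
  (List.range (n + 1 - j)).map fun k => h (j + k)

/-- The set `ℰ` of extensions `F · 𝐗[j+1..n]` of all solid factors `F` of the weighted
sequence. -/
def ExtSet {A : Type*} (n : ℕ) (z : ℝ) (p : ℕ → A → ℝ) (h : ℕ → A) : Set (List A) :=
  {S | ∃ i F, SolidAt n z p i F ∧ S = F ++ heavyExt h (i + F.length) n}

lemma matchProb_nonneg {A : Type*} (p : ℕ → A → ℝ) (hp0 : ∀ j a, 0 ≤ p j a) :
    ∀ (L : List A) (i : ℕ), 0 ≤ matchProb p i L := by
  intro L
  induction L with
  | nil => intro i; simp [matchProb]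
  | cons a t ih => intro i; exact mul_nonneg (hp0 i a) (ih (i + 1))

lemma heavyExt_cons {A : Type*} (h : ℕ → A) (j n : ℕ) (hj : j ≤ n) :
    heavyExt h j n = h j :: heavyExt h (j + 1) n := by
  unfold heavyExt
  have : n + 1 - j = (n + 1 - (j + 1)) + 1 := by omega
  rw [this, List.range_succ_eq_map]
  simp [Function.comp, Nat.add_assoc, Nat.add_comm 1]

/-- `ℰ` is closed under taking the longest proper suffix: deleting the first letter of a
nonempty element of `ℰ` yields an element of `ℰ`. -/
theorem stmt6 {A : Type*} (n : ℕ) (z : ℝ) (hz : 1 ≤ z) (p : ℕ → A → ℝ)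
    (hp0 : ∀ j a, 0 ≤ p j a) (hp1 : ∀ j a, p j a ≤ 1)
    (h : ℕ → A) (S : List A) (hS : S ∈ ExtSet n z p h) (hne : S ≠ []) :
    S.tail ∈ ExtSet n z p h := by
  obtain ⟨i, F, ⟨hi1, hin, hmp⟩, hSeq⟩ := hS
  cases F with
  | nil =>
    -- S = heavyExt h i n, nonempty so i ≤ n
    simp only [List.nil_append, List.length_nil, Nat.add_zero] at hSeq
    have hi_le : i ≤ n := by
      by_contra hgt
      apply hne
      rw [hSeq]
      unfold heavyExt
      have : n + 1 - i = 0 := by omega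
      simp [this]
    refine ⟨i + 1, [], ⟨by omega, by simp; omega, by
      simpa [matchProb] using div_le_one_of_le₀ hz (by linarith)⟩, ?_⟩
    rw [hSeq, heavyExt_cons h i n hi_le]
    simp
  | cons a F' =>
    refine ⟨i + 1, F', ⟨by omega, by simp at hin ⊢; omega, ?_⟩, ?_⟩
    · have hM : 0 ≤ matchProb p (i + 1) F' := matchProb_nonneg p hp0 F' (i + 1)
      calc 1 / z ≤ matchProb p i (a :: F') := hmp
        _ = p i a * matchProb p (i + 1) F' := rfl
        _ ≤ 1 * matchProb p (i + 1) F' := by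
            exact mul_le_mul_of_nonneg_right (hp1 i a) hM
        _ = matchProb p (i + 1) F' := one_mul _
    · rw [hSeq]
      simp only [List.cons_append, List.tail_cons, List.length_cons]
      congr 2
      omega
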